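/- arXiv:2203.01704 — 3 statements merged into one kernel-verified Lean document; each statement's English description precedes it below -/
import Mathlib

section
/- Let M be a nonnegative integer and let ξ > 0. Then 1/Γ(ξ) = ((M+1)^{-1/2} / (2π)^{M/2}) · ((M+1)^{(M+1)ξ} / Γ((M+1)ξ)) · ∏_{j=2}^{M+1} ∫_0^∞ t^{ξ + (j-1)/(M+1) - 1} e^{-t} dt. -/
open Real MeasureTheory Finset

/-!
Bohr–Mollerup: `s ↦ p ^ s * ∏_{k<p} Γ((s + k) / p)` is log-convex on `(0, ∞)` and satisfies
`f (s + 1) = s * f s`, so it equals `C_p * Γ s` with `C_p` its value at `1`. Splitting the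
product for `p * q` along `k = b * q + a` gives `C_{pq} = C_p ^ q * C_q * p ^ (-(q - 1) / 2)`,
and the two factorisations of `C_{2p}`, together with `C_2 = 2 √π`, force
`C_p = (2π) ^ ((p - 1) / 2) * √p`. This is Gauss's multiplication formula; at `p = M + 1`,
`z = ξ` its `k = 0` factor is `Γ ξ` and the others are the integrals of the statement.
-/

theorem convexOn_finset_sum {𝕜 E β ι : Type*} [Semiring 𝕜] [PartialOrder 𝕜] [AddCommMonoid E]
    [AddCommMonoid β] [PartialOrder β] [IsOrderedAddMonoid β] [SMul 𝕜 E] [Module 𝕜 β]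
    {D : Set E} (hD : Convex 𝕜 D) (t : Finset ι) {f : ι → E → β}
    (hf : ∀ i ∈ t, ConvexOn 𝕜 D (f i)) : ConvexOn 𝕜 D fun x => ∑ i ∈ t, f i x := by
  classical
  induction t using Finset.induction_on with
  | empty => simpa using convexOn_const (0 : β) hD
  | insert a t hat ih =>
    simp only [sum_insert hat]
    exact (hf a (mem_insert_self a t)).add (ih fun i hi => hf i (mem_insert_of_mem hi))

theorem prod_range_mul_eq_prod_prod {M : Type*} [CommMonoid M] (f : ℕ → M) (p q : ℕ) :
    ∏ k ∈ range (p * q), f k = ∏ b ∈ range p, ∏ a ∈ range q, f (b * q + a) := by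
  induction p with
  | zero => simp
  | succ n ih => rw [Nat.succ_mul, prod_range_add, ih, prod_range_succ]

theorem sum_range_add_div (q : ℕ) (hq : 0 < q) (s : ℝ) :
    ∑ a ∈ range q, (s + a) / q = s + ((q : ℝ) - 1) / 2 := by
  have h := congrArg (Nat.cast : ℕ → ℝ) (sum_range_id_mul_two q)
  push_cast [Nat.cast_sub hq] at h
  have hq' : (q : ℝ) ≠ 0 := by positivity
  rw [← sum_div, sum_add_distrib, sum_const, card_range, nsmul_eq_mul]
  field_simp
  linarith

namespace Real

theorem eq_mul_Gamma_of_log_convex {f : ℝ → ℝ} (hf_conv : ConvexOn ℝ (Set.Ioi 0) (log ∘ f))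
    (hf_feq : ∀ {y : ℝ}, 0 < y → f (y + 1) = y * f y) (hf_pos : ∀ {y : ℝ}, 0 < y → 0 < f y)
    {s : ℝ} (hs : 0 < s) : f s = f 1 * Gamma s := by
  have h1 : 0 < f 1 := hf_pos one_pos
  have hg_conv : ConvexOn ℝ (Set.Ioi 0) (log ∘ fun y => f y / f 1) :=
    (hf_conv.add_const (-log (f 1))).congr fun y hy => by
      simp [log_div (hf_pos hy).ne' h1.ne', sub_eq_add_neg]
  have hg := eq_Gamma_of_log_convex hg_conv (fun hy => by rw [hf_feq hy, mul_div_assoc])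
    (fun hy => div_pos (hf_pos hy) h1) (div_self h1.ne') hs
  rw [← hg, mul_div_cancel₀ _ h1.ne']

theorem convexOn_log_Gamma_comp_div (k : ℝ) {p : ℝ} (hp : 0 < p) :
    ConvexOn ℝ (Set.Ioi (-k)) fun s => log (Gamma ((s + k) / p)) := by
  let A : ℝ →ᵃ[ℝ] ℝ := (LinearMap.mul ℝ ℝ p⁻¹).toAffineMap + AffineMap.const ℝ ℝ (k / p)
  have hA : ∀ s, A s = (s + k) / p := fun s => by
    simp [A]
    ring
  have hpre : A ⁻¹' Set.Ioi 0 = Set.Ioi (-k) := by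
    ext s
    simp [hA, div_pos_iff_of_pos_right hp, neg_lt_iff_pos_add]
  have h := convexOn_log_Gamma.comp_affineMap A
  rw [hpre] at h
  exact h.congr fun s _ => by simp [hA]

noncomputable def multiplicationGamma (p : ℕ) (s : ℝ) : ℝ :=
  (p : ℝ) ^ s * ∏ k ∈ range p, Gamma ((s + k) / p)

variable {p : ℕ}

theorem multiplicationGamma_pos (hp : 0 < p) {s : ℝ} (hs : 0 < s) :
    0 < multiplicationGamma p s := by
  have hp' : (0 : ℝ) < p := Nat.cast_pos.mpr hp
  exact mul_pos (rpow_pos_of_pos hp' s) (prod_pos fun k _ => Gamma_pos_of_pos (by positivity))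

theorem multiplicationGamma_add_one (hp : 0 < p) {s : ℝ} (hs : 0 < s) :
    multiplicationGamma p (s + 1) = s * multiplicationGamma p s := by
  have hp' : (0 : ℝ) < p := Nat.cast_pos.mpr hp
  have hΓ0 : Gamma (s / p) ≠ 0 := (Gamma_pos_of_pos (by positivity)).ne'
  -- shifting `s` by one shifts the window `k = 0, …, p - 1` to `k = 1, …, p`
  have hshift : ∏ k ∈ range p, Gamma ((s + 1 + k) / p) =
      s / p * ∏ k ∈ range p, Gamma ((s + k) / p) := by
    have h := (prod_range_succ' (fun k : ℕ => Gamma ((s + k) / p)) p).symm.trans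
      (prod_range_succ _ p)
    simp only [Nat.cast_succ, ← add_assoc, add_right_comm s _ (1 : ℝ), Nat.cast_zero,
      add_zero] at h
    rw [add_div, div_self hp'.ne', Gamma_add_one (by positivity)] at h
    exact mul_right_cancel₀ hΓ0 (h.trans (by ring))
  rw [multiplicationGamma, multiplicationGamma, hshift, rpow_add hp', rpow_one]
  field_simp

theorem convexOn_log_multiplicationGamma (hp : 0 < p) :
    ConvexOn ℝ (Set.Ioi 0) (log ∘ multiplicationGamma p) := by
  have hp' : (0 : ℝ) < p := Nat.cast_pos.mpr hp
  have hterm : ∀ k ∈ range p, ConvexOn ℝ (Set.Ioi 0) fun s => log (Gamma ((s + k) / p)) :=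
    fun k _ => (convexOn_log_Gamma_comp_div k hp').subset
      (Set.Ioi_subset_Ioi (by simp)) (convex_Ioi 0)
  refine ((convexOn_finset_sum (convex_Ioi 0) _ hterm).add
    ((convexOn_id (convex_Ioi 0)).smul (log_nonneg (Nat.one_le_cast.mpr hp)))).congr
    fun s hs => ?_
  have hΓ : ∀ k ∈ range p, Gamma ((s + k) / p) ≠ 0 :=
    fun k _ => (Gamma_pos_of_pos (by have : (0 : ℝ) < s := hs; positivity)).ne'
  simp only [Function.comp_apply, multiplicationGamma, Pi.add_apply, id, smul_eq_mul]
  rw [log_mul (rpow_pos_of_pos hp' s).ne' (prod_ne_zero_iff.mpr hΓ), log_rpow hp', log_prod hΓ]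
  ring

theorem multiplicationGamma_eq (hp : 0 < p) {s : ℝ} (hs : 0 < s) :
    multiplicationGamma p s = multiplicationGamma p 1 * Gamma s :=
  eq_mul_Gamma_of_log_convex (convexOn_log_multiplicationGamma hp)
    (multiplicationGamma_add_one hp) (multiplicationGamma_pos hp) hs

variable {q : ℕ}

theorem multiplicationGamma_mul (hp : 0 < p) (hq : 0 < q) {s : ℝ} (hs : 0 < s) :
    multiplicationGamma (p * q) s =
      multiplicationGamma p 1 ^ q * (p : ℝ) ^ (-(((q : ℝ) - 1) / 2)) * multiplicationGamma q s := by
  have hp' : (0 : ℝ) < p := Nat.cast_pos.mpr hp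
  have hq' : (0 : ℝ) < q := Nat.cast_pos.mpr hq
  -- with `k = b * q + a`, the inner product over `b` is `multiplicationGamma p ((s + a) / q)`
  have hinner : ∀ a : ℕ, ∏ b ∈ range p, Gamma ((s + ↑(b * q + a)) / ↑(p * q)) =
      (p : ℝ) ^ (-((s + a) / q)) * (multiplicationGamma p 1 * Gamma ((s + a) / q)) := by
    intro a
    rw [← multiplicationGamma_eq hp (by positivity), multiplicationGamma, ← mul_assoc,
      ← rpow_add hp', neg_add_cancel, rpow_zero, one_mul]
    refine prod_congr rfl fun b _ => congrArg Gamma ?_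
    push_cast
    field_simp
    ring
  rw [multiplicationGamma, prod_range_mul_eq_prod_prod _ p q, prod_comm,
    prod_congr rfl fun a _ => hinner a, prod_mul_distrib, prod_mul_distrib, prod_const, card_range,
    ← rpow_sum_of_pos hp', sum_neg_distrib, sum_range_add_div q hq, multiplicationGamma.eq_1 q s]
  push_cast
  rw [mul_rpow hp'.le hq'.le, neg_add, rpow_add hp', rpow_neg hp'.le]
  field_simp

theorem multiplicationGamma_two_one : multiplicationGamma 2 1 = 2 * √π := by
  norm_num [multiplicationGamma, prod_range_succ, Gamma_one_half_eq]

theorem multiplicationGamma_one (hp : 0 < p) :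
    multiplicationGamma p 1 = (2 * π) ^ (((p : ℝ) - 1) / 2) * √p := by
  have hp' : (0 : ℝ) < p := Nat.cast_pos.mpr hp
  have h := (multiplicationGamma_mul two_pos hp one_pos).symm.trans
    (mul_comm p 2 ▸ multiplicationGamma_mul hp two_pos one_pos)
  rw [multiplicationGamma_two_one] at h
  set x := ((p : ℝ) - 1) / 2 with hx
  have hpow : (2 * √π) ^ p * (2 : ℝ) ^ (-x) = (2 * π) ^ x * (2 * √π) := by
    have hc : (0 : ℝ) < 2 * √π := by positivity
    calc (2 * √π) ^ p * (2 : ℝ) ^ (-x)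
        = ((2 * √π) ^ 2) ^ x * (2 * √π) * (2 : ℝ) ^ (-x) := by
          rw [← rpow_natCast, show (p : ℝ) = 2 * x + 1 by rw [hx]; ring, rpow_add hc,
            rpow_mul hc.le, rpow_one, rpow_two]
      _ = (2 * π) ^ x * (2 * √π) := by
          rw [show (2 * √π) ^ 2 = 2 * (2 * π) by rw [mul_pow, sq_sqrt pi_pos.le]; ring,
            mul_rpow zero_le_two (by positivity), rpow_neg zero_le_two]
          field_simp
  have hsqrt : √(p : ℝ) * (p : ℝ) ^ (-((2 - 1) / 2 : ℝ)) = 1 := by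
    rw [sqrt_eq_rpow, ← rpow_add hp']
    norm_num
  have hC := multiplicationGamma_pos hp one_pos
  refine mul_right_cancel₀
    (b := multiplicationGamma p 1 * (p : ℝ) ^ (-((2 - 1) / 2 : ℝ)) * (2 * √π)) (by positivity) ?_
  push_cast at h
  linear_combination -h + multiplicationGamma p 1 * hpow -
    (2 * π) ^ x * multiplicationGamma p 1 * (2 * √π) * hsqrt

theorem prod_Gamma_add_div (hp : 0 < p) {z : ℝ} (hz : 0 < z) :
    ∏ k ∈ range p, Gamma (z + k / p) =
      (2 * π) ^ (((p : ℝ) - 1) / 2) * (p : ℝ) ^ (1 / 2 - p * z) * Gamma (p * z) := by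
  have hp' : (0 : ℝ) < p := Nat.cast_pos.mpr hp
  have h := multiplicationGamma_eq hp (mul_pos hp' hz)
  rw [multiplicationGamma, multiplicationGamma_one hp] at h
  simp only [add_div, mul_div_cancel_left₀ z hp'.ne'] at h
  rw [rpow_sub hp', ← sqrt_eq_rpow, mul_div_assoc', div_mul_eq_mul_div,
    eq_div_iff (rpow_pos_of_pos hp' _).ne']
  linear_combination h

end Real

theorem stmt_4 (M : ℕ) (ξ : ℝ) (hξ : 0 < ξ) :
    1 / Real.Gamma ξ =
      (((M : ℝ) + 1) ^ (-(1 : ℝ) / 2) / (2 * π) ^ ((M : ℝ) / 2)) *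
        (((M : ℝ) + 1) ^ (((M : ℝ) + 1) * ξ) / Real.Gamma (((M : ℝ) + 1) * ξ)) *
        ∏ j ∈ Finset.Icc 2 (M + 1),
          ∫ t in Set.Ioi (0 : ℝ),
            t ^ (ξ + ((j : ℝ) - 1) / ((M : ℝ) + 1) - 1) * Real.exp (-t) := by
  have hM : (0 : ℝ) < M + 1 := by positivity
  have hintegral : ∀ j ∈ Icc 2 (M + 1),
      ∫ t in Set.Ioi (0 : ℝ), t ^ (ξ + ((j : ℝ) - 1) / (M + 1) - 1) * exp (-t) =
        Gamma (ξ + ((j : ℝ) - 1) / (M + 1)) := by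
    intro j hj
    have hj1 : (1 : ℝ) ≤ j := Nat.one_le_cast.mpr (one_le_two.trans (mem_Icc.mp hj).1)
    rw [Gamma_eq_integral (by have := sub_nonneg.mpr hj1; positivity)]
    simp_rw [mul_comm (exp _)]
  have hreindex : ∏ j ∈ Icc 2 (M + 1), Gamma (ξ + ((j : ℝ) - 1) / (M + 1)) =
      ∏ k ∈ range M, Gamma (ξ + ((k : ℝ) + 1) / (M + 1)) := by
    rw [← Finset.Ico_add_one_right_eq_Icc, prod_Ico_eq_prod_range, show M + 1 + 1 - 2 = M by omega]
    refine prod_congr rfl fun k _ => ?_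
    push_cast
    ring_nf
  have hgauss := prod_Gamma_add_div M.succ_pos hξ
  rw [prod_range_succ'] at hgauss
  push_cast at hgauss
  rw [zero_div, add_zero, add_sub_cancel_right, rpow_sub hM] at hgauss
  rw [prod_congr rfl hintegral, hreindex, eq_div_of_mul_eq (Gamma_pos_of_pos hξ).ne' hgauss,
    neg_div, rpow_neg hM.le]
  field_simp
end

section
/- Let m be a positive integer and define g(x) = (mx)^{mx - 1/2} / (Γ(mx) e^{mx}) for x > 0. Then for all ξ* > 0 and ξ > 0, min{1, g(ξ*)/g(ξ)} ≥ e^{-1/(12 m ξ*)} ≥ 1 - 1/(12 m ξ*). -/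
/-!
With `E y = log Γ(y) - (y - 1/2) log y + y` we have `g x = exp (-E (m x))`. The series
`log (1 + 1/a) = 2 ∑ (2a+1)^{-(2k+1)} / (2k+1)` gives
`0 ≤ E a - E (a + 1) ≤ 1/(12a) - 1/(12(a+1))`, so `E (a + n)` decreases and
`E (a + n) - 1/(12(a+n))` increases in `n`. The Euler limit formula for `Γ` shows that
`E (a + n) - E (b + n) → 0`, hence `E a ≤ E b + 1/(12a)` for all `a, b > 0`: this is
`g ξ* / g ξ ≥ exp (-1/(12 m ξ*))`. The last inequality is `exp t ≥ 1 + t`.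
-/

open Real Filter Topology

lemma hasSum_add_half_mul_log_one_add_inv_sub_one {a : ℝ} (ha : 0 < a) :
    HasSum (fun k : ℕ => 1 / (2 * ((k : ℝ) + 1) + 1) * ((1 / (2 * a + 1)) ^ 2) ^ (k + 1))
      ((a + 1 / 2) * log (1 + a⁻¹) - 1) := by
  have h := (hasSum_nat_add_iff' 1).mpr ((hasSum_log_one_add_inv ha).mul_left (a + 1 / 2))
  have ha' : 2 * a + 1 ≠ 0 := by positivity
  have hterm (k : ℕ) : (a + 1 / 2) * (2 * (1 / (2 * ((k + 1 : ℕ) : ℝ) + 1)) *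
      (1 / (2 * a + 1)) ^ (2 * (k + 1) + 1)) =
      1 / (2 * ((k : ℝ) + 1) + 1) * ((1 / (2 * a + 1)) ^ 2) ^ (k + 1) := by
    rw [pow_succ, pow_mul]
    push_cast
    field_simp
  have hfirst : (a + 1 / 2) * (2 * (1 / (2 * ((0 : ℕ) : ℝ) + 1)) *
      (1 / (2 * a + 1)) ^ (2 * 0 + 1)) = 1 := by
    norm_num
    field_simp
  simpa only [hterm, Finset.sum_range_one, hfirst] using h

lemma one_le_add_half_mul_log_one_add_inv {a : ℝ} (ha : 0 < a) :
    1 ≤ (a + 1 / 2) * log (1 + a⁻¹) := by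
  have := (hasSum_add_half_mul_log_one_add_inv_sub_one ha).nonneg fun k => by positivity
  linarith

lemma add_half_mul_log_one_add_inv_le {a : ℝ} (ha : 0 < a) :
    (a + 1 / 2) * log (1 + a⁻¹) ≤ 1 + (1 / (12 * a) - 1 / (12 * (a + 1))) := by
  set t : ℝ := (1 / (2 * a + 1)) ^ 2 with ht
  have ht0 : 0 ≤ t := sq_nonneg _
  have ht1 : t < 1 := by
    rw [ht, div_pow, one_pow, div_lt_one (by positivity)]
    nlinarith
  have hgeom : HasSum (fun k : ℕ => 1 / 3 * t * t ^ k) (1 / 3 * t * (1 - t)⁻¹) :=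
    (hasSum_geometric_of_lt_one ht0 ht1).mul_left _
  -- `1 / (2k + 3) ≤ 1 / 3` turns the tail into a geometric series.
  have hle (k : ℕ) : 1 / (2 * ((k : ℝ) + 1) + 1) * t ^ (k + 1) ≤ 1 / 3 * t * t ^ k := by
    have hk : 1 / (2 * ((k : ℝ) + 1) + 1) ≤ 1 / 3 :=
      one_div_le_one_div_of_le (by norm_num) (by linarith [k.cast_nonneg (α := ℝ)])
    calc 1 / (2 * ((k : ℝ) + 1) + 1) * t ^ (k + 1) ≤ 1 / 3 * t ^ (k + 1) := by gcongr
      _ = 1 / 3 * t * t ^ k := by ring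
  have hsum : 1 / 3 * t * (1 - t)⁻¹ = 1 / (12 * a) - 1 / (12 * (a + 1)) := by
    rw [mul_inv_eq_iff_eq_mul₀ (by linarith), ht]
    have : 2 * a + 1 ≠ 0 := by positivity
    field_simp
    ring
  linarith [hasSum_le hle (hasSum_add_half_mul_log_one_add_inv_sub_one ha) hgeom]

lemma tendsto_add_mul_log_one_add_div_atTop (x d : ℝ) :
    Tendsto (fun t => (t + d) * log (1 + x / t)) atTop (𝓝 x) := by
  have h1 : Tendsto (fun t : ℝ => 1 + x / t) atTop (𝓝 1) := by
    simpa using tendsto_const_nhds.add (tendsto_const_nhds.div_atTop (tendsto_id (α := ℝ)))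
  have hlog : Tendsto (fun t => log (1 + x / t)) atTop (𝓝 0) := by
    simpa using h1.log one_ne_zero
  simpa [add_mul] using (tendsto_mul_log_one_add_div_atTop x).add (hlog.const_mul d)

lemma tendsto_log_Gamma_add_nat_sub {x : ℝ} (hx : 0 < x) :
    Tendsto (fun n : ℕ => log (Gamma (x + n)) - log (Gamma n) - x * log n) atTop (𝓝 0) := by
  have hfeq : ∀ {y : ℝ}, 0 < y → (log ∘ Gamma) (y + 1) = (log ∘ Gamma) y + log y := fun hy => by
    simp [Gamma_add_one hy.ne', log_mul hy.ne' (Gamma_pos_of_pos hy).ne', add_comm]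
  have h := ((BohrMollerup.tendsto_log_gamma hx).add
    (tendsto_log_nat_add_one_sub_log.const_mul x)).const_sub (log (Gamma x))
  rw [← tendsto_add_atTop_iff_nat 1]
  convert h using 1
  · ext n
    have := BohrMollerup.f_add_nat_eq hfeq hx (n + 1)
    simp only [Function.comp_apply] at this
    rw [BohrMollerup.logGammaSeq, ← Gamma_nat_eq_factorial]
    push_cast at this ⊢
    rw [this]
    ring
  · simp

/-- Binet's function `μ` plus the constant `log √(2π)`. -/
noncomputable def stirlingRemainder (y : ℝ) : ℝ :=
  log (Gamma y) - (y - 1 / 2) * log y + y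

lemma stirlingRemainder_sub_stirlingRemainder_add_one {a : ℝ} (ha : 0 < a) :
    stirlingRemainder a - stirlingRemainder (a + 1) = (a + 1 / 2) * log (1 + a⁻¹) - 1 := by
  have hlog : log (1 + a⁻¹) = log (a + 1) - log a := by
    rw [← log_div (by positivity) ha.ne', add_div, div_self ha.ne', one_div]
  rw [stirlingRemainder, stirlingRemainder, Gamma_add_one ha.ne',
    log_mul ha.ne' (Gamma_pos_of_pos ha).ne', hlog]
  ring

lemma stirlingRemainder_add_one_le {a : ℝ} (ha : 0 < a) :
    stirlingRemainder (a + 1) ≤ stirlingRemainder a := by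
  linarith [stirlingRemainder_sub_stirlingRemainder_add_one ha,
    one_le_add_half_mul_log_one_add_inv ha]

lemma stirlingRemainder_sub_le_add_one {a : ℝ} (ha : 0 < a) :
    stirlingRemainder a - 1 / (12 * a) ≤ stirlingRemainder (a + 1) - 1 / (12 * (a + 1)) := by
  linarith [stirlingRemainder_sub_stirlingRemainder_add_one ha,
    add_half_mul_log_one_add_inv_le ha]

lemma stirlingRemainder_add_nat_le {a : ℝ} (ha : 0 < a) (n : ℕ) :
    stirlingRemainder (a + n) ≤ stirlingRemainder a := by
  have hanti : Antitone fun n : ℕ => stirlingRemainder (a + n) :=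
    antitone_nat_of_succ_le fun n => by
      simpa [add_assoc] using stirlingRemainder_add_one_le (a := a + n) (by positivity)
  simpa using hanti n.zero_le

lemma stirlingRemainder_le_add_nat {a : ℝ} (ha : 0 < a) (n : ℕ) :
    stirlingRemainder a ≤ stirlingRemainder (a + n) + 1 / (12 * a) := by
  have hmono : Monotone fun n : ℕ => stirlingRemainder (a + n) - 1 / (12 * (a + n)) :=
    monotone_nat_of_le_succ fun n => by
      simpa [add_assoc] using stirlingRemainder_sub_le_add_one (a := a + n) (by positivity)
  have h := hmono n.zero_le
  have : 0 ≤ 1 / (12 * (a + n)) := by positivity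
  simp only [Nat.cast_zero, add_zero] at h
  linarith

lemma tendsto_stirlingRemainder_add_nat_sub {x : ℝ} (hx : 0 < x) :
    Tendsto (fun n : ℕ => stirlingRemainder (x + n) - stirlingRemainder n) atTop (𝓝 0) := by
  have h := (tendsto_log_Gamma_add_nat_sub hx).sub
    (((tendsto_add_mul_log_one_add_div_atTop x (x - 1 / 2)).comp
      tendsto_natCast_atTop_atTop).sub_const x)
  rw [sub_self, sub_zero] at h
  refine h.congr' ?_
  filter_upwards [eventually_gt_atTop 0] with n hn
  have hn' : (0 : ℝ) < n := by exact_mod_cast hn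
  have hlog : log (x + n) = log n + log (1 + x / n) := by
    rw [← log_mul hn'.ne' (by positivity)]
    congr 1
    field_simp
    ring
  simp only [Function.comp_apply, stirlingRemainder, hlog]
  ring

lemma stirlingRemainder_le_add_one_div {a b : ℝ} (ha : 0 < a) (hb : 0 < b) :
    stirlingRemainder a ≤ stirlingRemainder b + 1 / (12 * a) := by
  have h := (tendsto_stirlingRemainder_add_nat_sub ha).sub
    (tendsto_stirlingRemainder_add_nat_sub hb)
  rw [sub_zero] at h
  have hle (n : ℕ) : stirlingRemainder a - stirlingRemainder b - 1 / (12 * a) ≤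
      stirlingRemainder (a + n) - stirlingRemainder n -
        (stirlingRemainder (b + n) - stirlingRemainder n) := by
    linarith [stirlingRemainder_le_add_nat ha n, stirlingRemainder_add_nat_le hb n]
  linarith [ge_of_tendsto' h hle]

lemma rpow_div_Gamma_mul_exp_eq_exp_neg_stirlingRemainder {y : ℝ} (hy : 0 < y) :
    y ^ (y - 1 / 2) / (Gamma y * exp y) = exp (-stirlingRemainder y) := by
  rw [rpow_def_of_pos hy, ← exp_log (Gamma_pos_of_pos hy), ← exp_add, ← exp_sub,
    stirlingRemainder]
  ring_nf

theorem stmt_18 (m : ℕ) (hm : 0 < m) (g : ℝ → ℝ)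
    (hg : ∀ x : ℝ, 0 < x →
      g x = ((m : ℝ) * x) ^ ((m : ℝ) * x - 1 / 2) /
        (Real.Gamma ((m : ℝ) * x) * Real.exp ((m : ℝ) * x)))
    (ξs ξ : ℝ) (hξs : 0 < ξs) (hξ : 0 < ξ) :
    min 1 (g ξs / g ξ) ≥ Real.exp (-1 / (12 * (m : ℝ) * ξs)) ∧
      Real.exp (-1 / (12 * (m : ℝ) * ξs)) ≥ 1 - 1 / (12 * (m : ℝ) * ξs) := by
  have hm' : (0 : ℝ) < m := by exact_mod_cast hm
  have hg' {x : ℝ} (hx : 0 < x) : g x = exp (-stirlingRemainder (m * x)) := by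
    rw [hg x hx, rpow_div_Gamma_mul_exp_eq_exp_neg_stirlingRemainder (by positivity)]
  have hbound := stirlingRemainder_le_add_one_div (mul_pos hm' hξs) (mul_pos hm' hξ)
  rw [← mul_assoc] at hbound
  have hε : 0 ≤ 1 / (12 * (m : ℝ) * ξs) := by positivity
  rw [neg_div]
  refine ⟨le_min (exp_le_one_iff.2 (by linarith)) ?_,
    by linarith [add_one_le_exp (-(1 / (12 * (m : ℝ) * ξs)))]⟩
  rw [hg' hξs, hg' hξ, ← exp_sub]
  exact exp_le_exp.2 (by linarith)
end

section
/- For every real s ≥ 0, ∫_0^∞ (1/√(2π)) · η^{1/2 - 1} · e^{-η/2} · e^{-s²/(2η)} dη = e^{-s}. -/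
open Real MeasureTheory Set

/-!
Substituting `η = u ^ 2` and completing the square, `u²/2 + s²/(2u²) = s + (u - s/u)²/2`, turns
the integral into `2 e^{-s} / √(2π) · ∫₀^∞ exp (-(u - s/u)²/2) du`. By the Cauchy–Schlömilch
transformation `∫₀^∞ g (u - s/u) du = ∫₀^∞ g t dt` for even `g`, this last integral is the
half-line Gaussian integral `√(2π)/2`. For the transformation, `t = u - s/u` maps `(0, ∞)` onto `ℝ`
with `dt = (1 + s/u²) du`, and the inversion `u ↦ s/u`, which only flips the sign of `u - s/u`,
shows that the two parts of this weight contribute the same integral.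
-/

section CauchySchlomilch

variable {E : Type*} [NormedAddCommGroup E] [NormedSpace ℝ E] {s : ℝ}

theorem Function.Even.integral_eq_two_smul_integral_Ioi {g : ℝ → E} (hg : g.Even)
    (hint : Integrable g) : ∫ t, g t = (2 : ℝ) • ∫ t in Ioi 0, g t := by
  rw [← intervalIntegral.integral_Iic_add_Ioi hint.integrableOn hint.integrableOn, two_smul,
    ← neg_zero, ← integral_comp_neg_Ioi, neg_zero]
  simp only [hg _]

theorem hasDerivAt_sub_div_self (s : ℝ) {u : ℝ} (hu : u ≠ 0) :
    HasDerivAt (fun u => u - s / u) (1 + s / u ^ 2) u := by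
  simpa [div_eq_mul_inv] using (hasDerivAt_id' u).fun_sub ((hasDerivAt_inv hu).const_mul s)

theorem strictMonoOn_sub_div_self (hs : 0 ≤ s) : StrictMonoOn (fun u => u - s / u) (Ioi 0) :=
  fun u hu _ _ huv => by linarith [div_le_div_of_nonneg_left hs hu huv.le]

theorem image_sub_div_self_Ioi (hs : 0 < s) : (fun u => u - s / u) '' Ioi 0 = univ := by
  refine eq_univ_of_forall fun t => ?_
  set r := √(t ^ 2 + 4 * s)
  have hr : r ^ 2 = t ^ 2 + 4 * s := sq_sqrt (by positivity)
  have hpos : 0 < t + r := by nlinarith [sqrt_nonneg (t ^ 2 + 4 * s)]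
  -- the positive root of `u ^ 2 - t * u - s`
  refine ⟨(t + r) / 2, div_pos hpos two_pos, ?_⟩
  field_simp
  nlinarith

theorem image_div_Ioi (hs : 0 < s) : (fun u => s / u) '' Ioi 0 = Ioi 0 :=
  Subset.antisymm (image_subset_iff.2 fun _ hu => div_pos hs hu) fun t ht =>
    ⟨s / t, div_pos hs ht, by field_simp⟩

theorem integral_Ioi_div_sq_smul_comp_div (hs : 0 < s) (h : ℝ → E) :
    ∫ u in Ioi 0, (s / u ^ 2) • h (s / u) = ∫ u in Ioi 0, h u := by
  have hderiv : ∀ u ∈ Ioi (0 : ℝ), HasDerivWithinAt (fun u => s / u) (-(s / u ^ 2)) (Ioi 0) u :=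
    fun u hu => by
      simpa [div_eq_mul_inv] using ((hasDerivAt_inv (ne_of_gt hu)).const_mul s).hasDerivWithinAt
  have hinj : InjOn (fun u => s / u) (Ioi 0) := fun u _ v _ huv => by
    simpa [hs.ne'] using congrArg (s / ·) huv
  conv_rhs => rw [← image_div_Ioi hs,
    integral_image_eq_integral_abs_deriv_smul measurableSet_Ioi hderiv hinj]
  refine setIntegral_congr_fun measurableSet_Ioi fun u hu => ?_
  rw [abs_neg, abs_of_pos (div_pos hs (pow_pos hu 2))]

theorem integral_Ioi_one_add_div_sq_smul_comp_sub_div (hs : 0 < s) (g : ℝ → E) :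
    ∫ u in Ioi 0, (1 + s / u ^ 2) • g (u - s / u) = ∫ t, g t := by
  conv_rhs => rw [← setIntegral_univ, ← image_sub_div_self_Ioi hs,
    integral_image_eq_integral_abs_deriv_smul measurableSet_Ioi
      (fun u hu => (hasDerivAt_sub_div_self s (ne_of_gt hu)).hasDerivWithinAt)
      (strictMonoOn_sub_div_self hs.le).injOn]
  refine setIntegral_congr_fun measurableSet_Ioi fun u hu => ?_
  rw [abs_of_pos (by positivity)]

theorem integrableOn_Ioi_one_add_div_sq_smul_comp_sub_div (hs : 0 < s) {g : ℝ → E}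
    (hint : Integrable g) :
    IntegrableOn (fun u => (1 + s / u ^ 2) • g (u - s / u)) (Ioi 0) := by
  have hjac := integrableOn_image_iff_integrableOn_abs_deriv_smul measurableSet_Ioi
    (fun u hu => (hasDerivAt_sub_div_self s (ne_of_gt hu)).hasDerivWithinAt)
    (strictMonoOn_sub_div_self hs.le).injOn g
  rw [image_sub_div_self_Ioi hs, integrableOn_univ] at hjac
  refine (hjac.1 hint).congr_fun (fun u hu => ?_) measurableSet_Ioi
  dsimp only
  rw [abs_of_pos (by positivity)]

theorem integrableOn_Ioi_comp_sub_div (hs : 0 < s) {g : ℝ → E} (hint : Integrable g) :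
    IntegrableOn (fun u => g (u - s / u)) (Ioi 0) := by
  have hweight_le : ∀ u : ℝ, ‖(1 + s / u ^ 2)⁻¹‖ ≤ 1 := fun u => by
    rw [norm_inv, Real.norm_of_nonneg (by positivity)]
    exact inv_le_one_of_one_le₀ (le_add_of_nonneg_right (by positivity))
  have hprod : IntegrableOn (fun u => (1 + s / u ^ 2)⁻¹ • (1 + s / u ^ 2) • g (u - s / u))
      (Ioi 0) :=
    (integrableOn_Ioi_one_add_div_sq_smul_comp_sub_div hs hint).bdd_smul 1
      (by fun_prop : Measurable fun u : ℝ => (1 + s / u ^ 2)⁻¹).aestronglyMeasurable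
      (Filter.Eventually.of_forall hweight_le)
  refine hprod.congr_fun (fun u _ => ?_) measurableSet_Ioi
  dsimp only
  rw [smul_smul, inv_mul_cancel₀ (by positivity), one_smul]

theorem Function.Even.integral_Ioi_comp_sub_div {g : ℝ → E} (hg : g.Even) (hint : Integrable g)
    (hs : 0 ≤ s) : ∫ u in Ioi 0, g (u - s / u) = ∫ t in Ioi 0, g t := by
  rcases hs.eq_or_lt with rfl | hs
  · simp
  have hsymm : ∫ u in Ioi 0, (s / u ^ 2) • g (u - s / u) = ∫ u in Ioi 0, g (u - s / u) := by
    rw [← integral_Ioi_div_sq_smul_comp_div hs fun u => g (u - s / u)]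
    refine setIntegral_congr_fun measurableSet_Ioi fun u hu => ?_
    have hu : u ≠ 0 := ne_of_gt hu
    rw [← hg]
    congr 2
    field_simp
    ring
  have hcomp := integrableOn_Ioi_comp_sub_div hs hint
  have hsplit := integral_Ioi_one_add_div_sq_smul_comp_sub_div hs g
  simp only [add_smul, one_smul] at hsplit
  rw [integral_add hcomp, hsymm, hg.integral_eq_two_smul_integral_Ioi hint, ← two_smul ℝ] at hsplit
  · exact smul_right_injective E two_ne_zero hsplit
  · refine ((integrableOn_Ioi_one_add_div_sq_smul_comp_sub_div hs hint).sub hcomp).congr_fun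
      (fun u _ => ?_) measurableSet_Ioi
    simp only [Pi.sub_apply, add_smul, one_smul, add_sub_cancel_left]

end CauchySchlomilch

theorem exp_neg_sq_div_two_mul_exp_neg_sq_div {u : ℝ} (hu : u ≠ 0) (s : ℝ) :
    exp (-u ^ 2 / 2) * exp (-s ^ 2 / (2 * u ^ 2)) =
      exp (-s) * exp (-(1 / 2) * (u - s / u) ^ 2) := by
  rw [← exp_add, ← exp_add]
  congr 1
  field_simp
  ring

theorem stmt_19 (s : ℝ) (hs : 0 ≤ s) :
    ∫ η in Set.Ioi (0 : ℝ),
        (1 / Real.sqrt (2 * π)) * η ^ ((1 : ℝ) / 2 - 1) * Real.exp (-η / 2) *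
          Real.exp (-s ^ 2 / (2 * η)) = Real.exp (-s) := by
  have hsubst : ∀ u ∈ Ioi (0 : ℝ),
      (2 * u ^ ((2 : ℝ) - 1)) • ((1 / √(2 * π)) * (u ^ (2 : ℝ)) ^ ((1 : ℝ) / 2 - 1) *
        exp (-(u ^ (2 : ℝ)) / 2) * exp (-s ^ 2 / (2 * u ^ (2 : ℝ))))
        = 2 / √(2 * π) * exp (-s) * exp (-(1 / 2) * (u - s / u) ^ 2) := fun u hu => by
    have hu : 0 < u := hu
    have hpow : (u ^ (2 : ℝ)) ^ ((1 : ℝ) / 2 - 1) = u⁻¹ := by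
      rw [← rpow_mul hu.le]; norm_num [rpow_neg_one]
    rw [show u ^ ((2 : ℝ) - 1) = u by norm_num, hpow, rpow_two, smul_eq_mul]
    calc 2 * u * (1 / √(2 * π) * u⁻¹ * exp (-u ^ 2 / 2) * exp (-s ^ 2 / (2 * u ^ 2)))
        = 2 / √(2 * π) * (u * u⁻¹) * (exp (-u ^ 2 / 2) * exp (-s ^ 2 / (2 * u ^ 2))) := by ring
      _ = 2 / √(2 * π) * exp (-s) * exp (-(1 / 2) * (u - s / u) ^ 2) := by
        rw [mul_inv_cancel₀ hu.ne', exp_neg_sq_div_two_mul_exp_neg_sq_div hu.ne']; ring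
  have hgauss_even : (fun t : ℝ => exp (-(1 / 2) * t ^ 2)).Even := fun t => by simp only [neg_sq]
  rw [← integral_comp_rpow_Ioi_of_pos two_pos, setIntegral_congr_fun measurableSet_Ioi hsubst,
    integral_const_mul, hgauss_even.integral_Ioi_comp_sub_div
      (integrable_exp_neg_mul_sq (by norm_num)) hs, integral_gaussian_Ioi,
    show π / (1 / 2) = 2 * π by ring]
  field_simp
end
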